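/- arXiv:2204.10506 — 6 statements merged into one kernel-verified Lean document; each statement's English description precedes it below -/
import Mathlib

section
/- If f ∈ C^{2,2}([0,1]²), then |f(x,y) − B_{n,m}f(x,y)| ≤ (1/2)[ x(1−x)/n · ‖f^{(2,0)}‖ + y(1−y)/m · ‖f^{(0,2)}‖ ] for all (x,y) ∈ [0,1]². -/
open Set Finset

/-- Bernstein basis polynomial `p_{n,k}(x) = C(n,k) x^k (1-x)^{n-k}`. -/
noncomputable def bp (n k : ℕ) (x : ℝ) : ℝ :=
  (n.choose k : ℝ) * x ^ k * (1 - x) ^ (n - k)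

/-- AKR node `t_{n,k}^j = (k(k-1)⋯(k-j+1)/(n(n-1)⋯(n-j+1)))^{1/j}`. -/
noncomputable def akrNode (n j k : ℕ) : ℝ :=
  ((∏ i ∈ Finset.range j, ((k : ℝ) - i)) / (∏ i ∈ Finset.range j, ((n : ℝ) - i))) ^ ((j : ℝ)⁻¹)

/-- Classical Bernstein operator. -/
noncomputable def bern (n : ℕ) (f : ℝ → ℝ) (x : ℝ) : ℝ :=
  ∑ k ∈ Finset.range (n + 1), f ((k : ℝ) / n) * bp n k x

/-- Aldaz–Kounchev–Render operator. -/
noncomputable def akr (n j : ℕ) (f : ℝ → ℝ) (x : ℝ) : ℝ :=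
  ∑ k ∈ Finset.range (n + 1), f (akrNode n j k) * bp n k x

/-- Bivariate tensor-product Bernstein operator. -/
noncomputable def bern2 (n m : ℕ) (f : ℝ → ℝ → ℝ) (x y : ℝ) : ℝ :=
  ∑ i ∈ Finset.range (n + 1), ∑ k ∈ Finset.range (m + 1),
    f ((i : ℝ) / n) ((k : ℝ) / m) * bp n i x * bp m k y

/-- Bivariate tensor-product AKR operator. -/
noncomputable def akr2 (n m j : ℕ) (f : ℝ → ℝ → ℝ) (x y : ℝ) : ℝ :=
  ∑ i ∈ Finset.range (n + 1), ∑ k ∈ Finset.range (m + 1),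
    f (akrNode n j i) (akrNode m j k) * bp n i x * bp m k y

/-! In one variable `B_n` reproduces affine functions, so `g x - B_n g x` is minus the
`B_n`-average of the Taylor remainders `g (k/n) - g x - g' x (k/n - x)`; each is at most
`‖g''‖ / 2 · (k/n - x)²`, and the second moment `∑ (k/n - x)² p_{n,k}(x) = x(1-x)/n` gives
`|g x - B_n g x| ≤ ‖g''‖ x(1-x) / (2n)`. The tensor-product operator factors as
`B_{n,m} f (x, y) = B_m (v ↦ B_n (f · v) x) y`, hence
`f x y - B_{n,m} f x y = (f x y - B_m (f x) y) + B_m (v ↦ f x v - B_n (f · v) x) y`: a univariate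
error in `y` plus a positive average, with total weight one, of univariate errors in `x`. -/

theorem abs_sub_sub_mul_le_of_hasDerivWithinAt {s : Set ℝ} (hs : Convex ℝ s)
    {g g' g'' : ℝ → ℝ} {M : ℝ} (hg : ∀ t ∈ s, HasDerivWithinAt g (g' t) s t)
    (hg' : ∀ t ∈ s, HasDerivWithinAt g' (g'' t) s t) (hM : ∀ t ∈ s, |g'' t| ≤ M)
    {a b : ℝ} (ha : a ∈ s) (hb : b ∈ s) :
    |g b - g a - g' a * (b - a)| ≤ M / 2 * (b - a) ^ 2 := by
  have hlip : ∀ t ∈ s, |g' t - g' a| ≤ M * |t - a| := fun t ht =>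
    hs.norm_image_sub_le_of_norm_hasDerivWithin_le hg' hM ha ht
  set p : ℝ → ℝ := fun u => a + u * (b - a)
  have hp : ∀ u ∈ Icc (0 : ℝ) 1, p u ∈ s := fun u hu => hs.add_smul_sub_mem ha hb hu
  -- Working along the segment `u ↦ a + u (b - a)`, `u ∈ [0, 1]`, avoids a case split on `a ≤ b`.
  set ψ : ℝ → ℝ := fun u => g (p u) - g a - g' a * (u * (b - a))
  have hψ : ∀ u ∈ Icc (0 : ℝ) 1,
      HasDerivWithinAt ψ ((g' (p u) - g' a) * (b - a)) (Icc 0 1) u := by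
    intro u hu
    have hpd : HasDerivWithinAt p (b - a) (Icc 0 1) u :=
      (((hasDerivAt_id' u).mul_const (b - a)).const_add a).hasDerivWithinAt.congr_deriv (by ring)
    exact ((((hg (p u) (hp u hu)).comp u hpd hp).sub_const (g a)).sub
      (((hasDerivAt_id' u).mul_const (b - a)).const_mul (g' a)).hasDerivWithinAt).congr_deriv
      (by ring)
  have key := image_norm_le_of_norm_deriv_right_le_deriv_boundary (f := ψ)
    (B := fun u => M / 2 * (b - a) ^ 2 * u ^ 2) (B' := fun u => M * (b - a) ^ 2 * u)
    (fun u hu => (hψ u hu).continuousWithinAt)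
    (fun u hu => (hψ u (Ico_subset_Icc_self hu)).mono_of_mem_nhdsWithin (Icc_mem_nhdsGE_of_mem hu))
    (by simp [ψ, p]) (fun u =>
      ((hasDerivAt_pow 2 u).const_mul (M / 2 * (b - a) ^ 2)).congr_deriv (by ring))
    (fun u hu => ?_) (right_mem_Icc.2 zero_le_one)
  · simpa [ψ, p] using key
  · calc ‖(g' (p u) - g' a) * (b - a)‖ = |g' (p u) - g' a| * |b - a| := by
          rw [Real.norm_eq_abs, abs_mul]
      _ ≤ M * |p u - a| * |b - a| := by
          gcongr; exact hlip _ (hp u (Ico_subset_Icc_self hu))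
      _ = M * (b - a) ^ 2 * u := by
          simp only [p, add_sub_cancel_left, abs_mul, abs_of_nonneg hu.1]
          rw [mul_assoc, mul_assoc, ← sq, sq_abs]; ring

theorem bp_eq_eval_bernsteinPolynomial (n k : ℕ) (x : ℝ) :
    bp n k x = (bernsteinPolynomial ℝ n k).eval x := by
  simp [bernsteinPolynomial, bp]

theorem bp_nonneg (n k : ℕ) {x : ℝ} (hx : x ∈ Icc (0 : ℝ) 1) : 0 ≤ bp n k x := by
  have := hx.1
  have : 0 ≤ 1 - x := sub_nonneg.2 hx.2
  unfold bp; positivity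

theorem sum_bp (n : ℕ) (x : ℝ) : ∑ k ∈ range (n + 1), bp n k x = 1 := by
  simpa [Polynomial.eval_finsetSum, bp_eq_eval_bernsteinPolynomial] using
    congrArg (Polynomial.eval x) (bernsteinPolynomial.sum ℝ n)

theorem sum_sub_mul_bp {n : ℕ} (hn : n ≠ 0) (x : ℝ) :
    ∑ k ∈ range (n + 1), ((k : ℝ) / n - x) * bp n k x = 0 := by
  have h := congrArg (Polynomial.eval x) (bernsteinPolynomial.sum_smul ℝ n)
  simp only [Polynomial.eval_finsetSum, nsmul_eq_mul, Polynomial.eval_mul, Polynomial.eval_X,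
    Polynomial.eval_natCast, ← bp_eq_eval_bernsteinPolynomial] at h
  have hn' : (n : ℝ) ≠ 0 := Nat.cast_ne_zero.2 hn
  simp only [sub_mul, sum_sub_distrib, ← mul_sum, sum_bp, div_mul_eq_mul_div, ← sum_div, h]
  field_simp
  ring

theorem sum_sq_sub_mul_bp {n : ℕ} (hn : n ≠ 0) (x : ℝ) :
    ∑ k ∈ range (n + 1), ((k : ℝ) / n - x) ^ 2 * bp n k x = x * (1 - x) / n := by
  have h := congrArg (Polynomial.eval x) (bernsteinPolynomial.variance ℝ n)
  simp only [Polynomial.eval_finsetSum, Polynomial.eval_mul, nsmul_eq_mul,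
    Polynomial.eval_pow, Polynomial.eval_sub, Polynomial.eval_X, Polynomial.eval_natCast,
    Polynomial.eval_one, ← bp_eq_eval_bernsteinPolynomial] at h
  have hn' : (n : ℝ) ≠ 0 := Nat.cast_ne_zero.2 hn
  have e : ∀ k : ℕ, ((k : ℝ) / n - x) ^ 2 = (n * x - k) ^ 2 / n ^ 2 := fun k => by
    field_simp; ring
  simp only [e, div_mul_eq_mul_div, ← sum_div, h]
  field_simp

theorem natCast_div_mem_Icc {n k : ℕ} (hk : k ∈ range (n + 1)) : (k : ℝ) / n ∈ Icc (0 : ℝ) 1 :=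
  ⟨by positivity, div_le_one_of_le₀ (by exact_mod_cast mem_range_succ_iff.1 hk) n.cast_nonneg⟩

theorem abs_bern_le {n : ℕ} {g : ℝ → ℝ} {C : ℝ} (hg : ∀ k ∈ range (n + 1), |g (k / n)| ≤ C)
    {x : ℝ} (hx : x ∈ Icc (0 : ℝ) 1) : |bern n g x| ≤ C :=
  calc |bern n g x| ≤ ∑ k ∈ range (n + 1), |g (k / n) * bp n k x| := abs_sum_le_sum_abs _ _
    _ ≤ ∑ k ∈ range (n + 1), C * bp n k x := sum_le_sum fun k hk => by
        rw [abs_mul, abs_of_nonneg (bp_nonneg n k hx)]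
        exact mul_le_mul_of_nonneg_right (hg k hk) (bp_nonneg n k hx)
    _ = C := by rw [← mul_sum, sum_bp, mul_one]

theorem bern_sub (n : ℕ) (g h : ℝ → ℝ) (x : ℝ) :
    bern n (fun t => g t - h t) x = bern n g x - bern n h x := by
  simp only [bern, sub_mul, sum_sub_distrib]

theorem bern2_eq_bern_bern (n m : ℕ) (f : ℝ → ℝ → ℝ) (x y : ℝ) :
    bern2 n m f x y = bern m (fun v => bern n (fun u => f u v) x) y := by
  simp only [bern2, bern, sum_mul]
  rw [sum_comm]

theorem abs_sub_bern_le {g g' g'' : ℝ → ℝ} {M : ℝ}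
    (hg : ∀ t ∈ Icc (0 : ℝ) 1, HasDerivWithinAt g (g' t) (Icc 0 1) t)
    (hg' : ∀ t ∈ Icc (0 : ℝ) 1, HasDerivWithinAt g' (g'' t) (Icc 0 1) t)
    (hM : ∀ t ∈ Icc (0 : ℝ) 1, |g'' t| ≤ M) {n : ℕ} (hn : n ≠ 0)
    {x : ℝ} (hx : x ∈ Icc (0 : ℝ) 1) :
    |g x - bern n g x| ≤ M / 2 * (x * (1 - x) / n) := by
  set R : ℕ → ℝ := fun k => g (k / n) - g x - g' x * (k / n - x)
  have hR : ∑ k ∈ range (n + 1), R k * bp n k x = bern n g x - g x * ∑ k ∈ range (n + 1), bp n k x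
      - g' x * ∑ k ∈ range (n + 1), ((k : ℝ) / n - x) * bp n k x := by
    simp only [R, bern, mul_sum, ← sum_sub_distrib]
    exact sum_congr rfl fun k _ => by ring
  rw [sum_bp, sum_sub_mul_bp hn, mul_one, mul_zero, sub_zero] at hR
  calc |g x - bern n g x| = |∑ k ∈ range (n + 1), R k * bp n k x| := by rw [hR, abs_sub_comm]
    _ ≤ ∑ k ∈ range (n + 1), |R k * bp n k x| := abs_sum_le_sum_abs _ _
    _ ≤ ∑ k ∈ range (n + 1), M / 2 * ((k / n - x) ^ 2 * bp n k x) := sum_le_sum fun k hk => by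
        rw [abs_mul, abs_of_nonneg (bp_nonneg n k hx), ← mul_assoc]
        exact mul_le_mul_of_nonneg_right (abs_sub_sub_mul_le_of_hasDerivWithinAt
          (convex_Icc 0 1) hg hg' hM hx (natCast_div_mem_Icc hk)) (bp_nonneg n k hx)
    _ = M / 2 * (x * (1 - x) / n) := by rw [← mul_sum, sum_sq_sub_mul_bp hn]

theorem abs_le_iSup_abs_of_continuousOn {X Y : Type*} [TopologicalSpace X] [TopologicalSpace Y]
    {K : Set X} {L : Set Y} (hK : IsCompact K) (hL : IsCompact L) {F : X → Y → ℝ}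
    (hF : ContinuousOn (fun p : X × Y => F p.1 p.2) (K ×ˢ L)) {a : X} {b : Y}
    (ha : a ∈ K) (hb : b ∈ L) : |F a b| ≤ ⨆ p : K × L, |F p.1 p.2| := by
  have := isCompact_iff_compactSpace.1 hK
  have := isCompact_iff_compactSpace.1 hL
  have hc : Continuous fun p : K × L => |F p.1 p.2| :=
    (hF.comp_continuous (by fun_prop) fun p => mk_mem_prod p.1.2 p.2.2).abs
  exact le_ciSup (isCompact_range hc).bddAbove (⟨a, ha⟩, ⟨b, hb⟩)

theorem stmt3 (n m : ℕ) (hn : 1 ≤ n) (hm : 1 ≤ m) (f fx fy fxx fyy : ℝ → ℝ → ℝ)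
    (hfx : ∀ y ∈ Icc (0:ℝ) 1, ∀ x ∈ Icc (0:ℝ) 1,
      HasDerivWithinAt (fun u => f u y) (fx x y) (Icc 0 1) x)
    (hfxx : ∀ y ∈ Icc (0:ℝ) 1, ∀ x ∈ Icc (0:ℝ) 1,
      HasDerivWithinAt (fun u => fx u y) (fxx x y) (Icc 0 1) x)
    (hfy : ∀ x ∈ Icc (0:ℝ) 1, ∀ y ∈ Icc (0:ℝ) 1,
      HasDerivWithinAt (fun v => f x v) (fy x y) (Icc 0 1) y)
    (hfyy : ∀ x ∈ Icc (0:ℝ) 1, ∀ y ∈ Icc (0:ℝ) 1,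
      HasDerivWithinAt (fun v => fy x v) (fyy x y) (Icc 0 1) y)
    (hcxx : ContinuousOn (fun p : ℝ × ℝ => fxx p.1 p.2) (Set.Icc (0:ℝ) 1 ×ˢ Set.Icc (0:ℝ) 1))
    (hcyy : ContinuousOn (fun p : ℝ × ℝ => fyy p.1 p.2) (Set.Icc (0:ℝ) 1 ×ˢ Set.Icc (0:ℝ) 1)) :
    ∀ x ∈ Icc (0:ℝ) 1, ∀ y ∈ Icc (0:ℝ) 1,
      |f x y - bern2 n m f x y| ≤
        (1 / 2) * (x * (1 - x) / n *
            (⨆ p : Set.Icc (0:ℝ) 1 × Set.Icc (0:ℝ) 1, |fxx p.1 p.2|) +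
          y * (1 - y) / m *
            (⨆ p : Set.Icc (0:ℝ) 1 × Set.Icc (0:ℝ) 1, |fyy p.1 p.2|)) := by
  intro x hx y hy
  set Mx := ⨆ p : Set.Icc (0:ℝ) 1 × Set.Icc (0:ℝ) 1, |fxx p.1 p.2|
  set My := ⨆ p : Set.Icc (0:ℝ) 1 × Set.Icc (0:ℝ) 1, |fyy p.1 p.2|
  have hy_err : |f x y - bern m (f x) y| ≤ My / 2 * (y * (1 - y) / m) :=
    abs_sub_bern_le (hfy x hx) (hfyy x hx)
      (fun t ht => abs_le_iSup_abs_of_continuousOn isCompact_Icc isCompact_Icc hcyy hx ht)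
      (by omega) hy
  have hx_err : ∀ k ∈ range (m + 1),
      |f x (k / m) - bern n (fun u => f u (k / m)) x| ≤ Mx / 2 * (x * (1 - x) / n) :=
    fun k hk => abs_sub_bern_le (hfx _ (natCast_div_mem_Icc hk)) (hfxx _ (natCast_div_mem_Icc hk))
      (fun t ht => abs_le_iSup_abs_of_continuousOn isCompact_Icc isCompact_Icc hcxx ht
        (natCast_div_mem_Icc hk)) (by omega) hx
  have hsplit : f x y - bern2 n m f x y = (f x y - bern m (f x) y)
      + bern m (fun v => f x v - bern n (fun u => f u v) x) y := by
    rw [bern2_eq_bern_bern, bern_sub]; ring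
  calc |f x y - bern2 n m f x y|
      ≤ |f x y - bern m (f x) y| + |bern m (fun v => f x v - bern n (fun u => f u v) x) y| := by
        rw [hsplit]; exact abs_add_le _ _
    _ ≤ My / 2 * (y * (1 - y) / m) + Mx / 2 * (x * (1 - x) / n) :=
        add_le_add hy_err (abs_bern_le hx_err hy)
    _ = _ := by ring
end

section
/- Let j ≥ 2 be an integer and f ∈ C²[0,1]. Then f is increasing on [0,1] and the function g(x) := f(x^{1/j}) is convex on [0,1] if and only if f'(x) ≥ 0 and x f''(x) − (j−1) f'(x) ≥ 0 for all x ∈ [0,1]. -/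
/-!
Put `c = 1/j` and `g x = f (x ^ c)`. On `(0,1)` one computes
`g'' x = c² x^(c-2) (u f'' u - (j-1) f' u)` with `u = x ^ c`, because `c⁻¹ - 1 = j - 1`.
For differentiable functions, monotonicity on `[0,1]` is equivalent to `f' ≥ 0`, and convexity
of `g` is equivalent to `g'' ≥ 0` on `(0,1)`. Since `x ↦ x ^ c` maps `(0,1)` onto itself, the
latter says `u f'' u - (j-1) f' u ≥ 0` on `(0,1)`, which extends to `[0,1]` by continuity.
-/

open Set Finset

lemma preperfect_Icc {a b : ℝ} (h : a < b) : Preperfect (Icc a b) := by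
  simpa [closure_Ioo h.ne] using (isOpen_Ioo (a := a) (b := b)).perfect_closure.acc

lemma monotoneOn_iff_hasDerivWithinAt_nonneg {D : Set ℝ} (hD : Convex ℝ D) (hD' : Preperfect D)
    {f f' : ℝ → ℝ} (hf : ∀ x ∈ D, HasDerivWithinAt f (f' x) D x) :
    MonotoneOn f D ↔ ∀ x ∈ D, 0 ≤ f' x := by
  refine ⟨fun hmono x hx => (hf x hx).nonneg_of_monotoneOn (hD' x hx) hmono, fun hnonneg => ?_⟩
  exact monotoneOn_of_hasDerivWithinAt_nonneg hD (fun x hx => (hf x hx).continuousWithinAt)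
    (fun x hx => (hf x (interior_subset hx)).mono interior_subset)
    (fun x hx => hnonneg x (interior_subset hx))

lemma convexOn_iff_hasDerivAt2_nonneg {D : Set ℝ} (hD : Convex ℝ D) {g g' g'' : ℝ → ℝ}
    (hg : ContinuousOn g D) (hg' : ∀ x ∈ interior D, HasDerivAt g (g' x) x)
    (hg'' : ∀ x ∈ interior D, HasDerivAt g' (g'' x) x) :
    ConvexOn ℝ D g ↔ ∀ x ∈ interior D, 0 ≤ g'' x := by
  refine ⟨fun hconv x hx => ?_, fun hnonneg => ?_⟩
  · have hmono : MonotoneOn g' (interior D) := by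
      intro a ha b hb hab
      rw [← (hg' a ha).deriv, ← (hg' b hb).deriv]
      exact (hconv.subset interior_subset hD.interior).monotoneOn_deriv
        (fun y hy => (hg' y hy).differentiableAt) ha hb hab
    exact (hg'' x hx).hasDerivWithinAt.nonneg_of_monotoneOn
      (isOpen_interior.preperfect x hx) hmono
  · exact convexOn_of_hasDerivWithinAt2_nonneg hD hg (fun x hx => (hg' x hx).hasDerivWithinAt)
      (fun x hx => (hg'' x hx).hasDerivWithinAt) hnonneg

section RpowComp

variable {f f' f'' : ℝ → ℝ} {c x : ℝ}

lemma HasDerivAt.comp_rpow_const (hx : 0 < x) (hf : HasDerivAt f (f' (x ^ c)) (x ^ c)) :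
    HasDerivAt (fun y => f (y ^ c)) (f' (x ^ c) * (c * x ^ (c - 1))) x :=
  hf.comp x (Real.hasDerivAt_rpow_const (Or.inl hx.ne'))

/-- The factor `c ^ 2 * x ^ (c - 2)` is positive, so the sign of the second derivative of
`y ↦ f (y ^ c)` is that of the bracket. -/
lemma HasDerivAt.comp_rpow_const_deriv (hc : c ≠ 0) (hx : 0 < x)
    (hf' : HasDerivAt f' (f'' (x ^ c)) (x ^ c)) :
    HasDerivAt (fun y => f' (y ^ c) * (c * y ^ (c - 1)))
      (c ^ 2 * x ^ (c - 2) * (x ^ c * f'' (x ^ c) - (c⁻¹ - 1) * f' (x ^ c))) x := by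
  have hpow : HasDerivAt (fun y => c * y ^ (c - 1)) (c * ((c - 1) * x ^ (c - 1 - 1))) x :=
    (Real.hasDerivAt_rpow_const (Or.inl hx.ne')).const_mul c
  refine ((hf'.comp_rpow_const hx).mul hpow).congr_deriv ?_
  have hsq : x ^ (c - 1) * x ^ (c - 1) = x ^ (c - 2) * x ^ c := by
    rw [← Real.rpow_add hx, ← Real.rpow_add hx]; ring_nf
  have hinv : c * c⁻¹ = 1 := mul_inv_cancel₀ hc
  rw [show c - 1 - 1 = c - 2 by ring]
  linear_combination c ^ 2 * f'' (x ^ c) * hsq + c * f' (x ^ c) * x ^ (c - 2) * hinv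

end RpowComp

lemma forall_mem_Ioo_nonneg_comp_rpow_iff {E : ℝ → ℝ} {c : ℝ} (hc : 0 < c)
    (hE : ContinuousOn E (Icc 0 1)) :
    (∀ x ∈ Ioo (0:ℝ) 1, 0 ≤ E (x ^ c)) ↔ ∀ x ∈ Icc (0:ℝ) 1, 0 ≤ E x := by
  refine ⟨fun h x hx => ?_, fun h x hx =>
    h _ ⟨Real.rpow_nonneg hx.1.le c, Real.rpow_le_one hx.1.le hx.2.le hc.le⟩⟩
  refine ContinuousWithinAt.closure_le (s := Ioo 0 1) (by rwa [closure_Ioo zero_ne_one])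
    continuousWithinAt_const ((hE x hx).mono Ioo_subset_Icc_self) fun u hu => ?_
  have hroot : u ^ c⁻¹ ∈ Ioo (0:ℝ) 1 :=
    ⟨Real.rpow_pos_of_pos hu.1 _, Real.rpow_lt_one hu.1.le hu.2 (inv_pos.mpr hc)⟩
  simpa [Real.rpow_inv_rpow hu.1.le hc.ne'] using h _ hroot

theorem stmt4 (j : ℕ) (hj : 2 ≤ j) (f f' f'' : ℝ → ℝ)
    (hf' : ∀ x ∈ Icc (0:ℝ) 1, HasDerivWithinAt f (f' x) (Icc 0 1) x)
    (hf'' : ∀ x ∈ Icc (0:ℝ) 1, HasDerivWithinAt f' (f'' x) (Icc 0 1) x)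
    (hc : ContinuousOn f'' (Icc 0 1)) :
    (MonotoneOn f (Icc 0 1) ∧ ConvexOn ℝ (Icc 0 1) (fun x => f (x ^ ((j : ℝ)⁻¹)))) ↔
      (∀ x ∈ Icc (0:ℝ) 1, 0 ≤ f' x ∧ 0 ≤ x * f'' x - ((j : ℝ) - 1) * f' x) := by
  have hj0 : j ≠ 0 := by omega
  set c : ℝ := (j : ℝ)⁻¹
  have hc0 : 0 < c := inv_pos.mpr (by exact_mod_cast Nat.pos_of_ne_zero hj0)
  have hcinv : c⁻¹ = j := inv_inv _
  have hpow : ∀ x ∈ Ioo (0:ℝ) 1, x ^ c ∈ Ioo (0:ℝ) 1 := fun x hx =>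
    ⟨Real.rpow_pos_of_pos hx.1 c, Real.rpow_lt_one hx.1.le hx.2 hc0⟩
  have hat : ∀ {φ φ' : ℝ → ℝ}, (∀ x ∈ Icc (0:ℝ) 1, HasDerivWithinAt φ (φ' x) (Icc 0 1) x) →
      ∀ x ∈ interior (Icc (0:ℝ) 1), HasDerivAt φ (φ' (x ^ c)) (x ^ c) := fun hφ x hx => by
    rw [interior_Icc] at hx
    exact (hφ _ (Ioo_subset_Icc_self (hpow x hx))).hasDerivAt
      (Icc_mem_nhds (hpow x hx).1 (hpow x hx).2)
  have hgc : ContinuousOn (fun x => f (x ^ c)) (Icc 0 1) :=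
    ContinuousOn.comp (fun x hx => (hf' x hx).continuousWithinAt)
      (continuousOn_id.rpow_const fun _ _ => Or.inr hc0.le)
      fun x hx => ⟨Real.rpow_nonneg hx.1 c, Real.rpow_le_one hx.1 hx.2 hc0.le⟩
  have hE : ContinuousOn (fun x => x * f'' x - ((j : ℝ) - 1) * f' x) (Icc 0 1) :=
    (continuousOn_id.mul hc).sub
      (continuousOn_const.mul fun x hx => (hf'' x hx).continuousWithinAt)
  have weight_pos : ∀ x ∈ Ioo (0:ℝ) 1, 0 < c ^ 2 * x ^ (c - 2) := fun x hx =>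
    mul_pos (pow_pos hc0 2) (Real.rpow_pos_of_pos hx.1 _)
  rw [monotoneOn_iff_hasDerivWithinAt_nonneg (convex_Icc 0 1) (preperfect_Icc zero_lt_one) hf',
    convexOn_iff_hasDerivAt2_nonneg (convex_Icc 0 1) hgc
      (fun x hx => (hat hf' x hx).comp_rpow_const (by rw [interior_Icc] at hx; exact hx.1))
      (fun x hx => (hat hf'' x hx).comp_rpow_const_deriv hc0.ne'
        (by rw [interior_Icc] at hx; exact hx.1)),
    interior_Icc, hcinv, forall₂_and,
    forall₂_congr fun x hx => mul_nonneg_iff_of_pos_left (weight_pos x hx),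
    forall_mem_Ioo_nonneg_comp_rpow_iff hc0 hE]
end

section
/- Let j ≥ 2 and f ∈ C²[0,1] with f'(x) ≥ 0 and x f''(x) − (j−1) f'(x) ≥ 0 for all x ∈ [0,1]. Then there exists a function φ ∈ C[0,1] ∩ C¹(0,1] with φ ≥ 0, φ' ≥ 0 on (0,1], and lim_{x→0} x^{j−1} φ'(x) finite, such that f(x) = f(0) + ∫_0^x t^{j−1} φ(t) dt for all x ∈ [0,1]. -/
open Set Finset

/-!
Take `φ x = f' x / x ^ (j - 1)`. Its derivative `(x f'' x - (j - 1) f' x) / x ^ j` is nonnegative,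
so `φ` is monotone and nonnegative on `(0, 1]` and extends continuously to `0` by its infimum.
The hypothesis at `x = 0` forces `f' 0 = 0`, so `x ^ (j - 1) φ' x = f'' x - (j - 1) f' x / x`
tends to `(2 - j) f'' 0`, and `t ^ (j - 1) φ t = f' t` turns the integral formula into the
fundamental theorem of calculus.
-/

open Filter Topology Function

theorem MonotoneOn.exists_tendsto_nhdsGT {g : ℝ → ℝ} {a b c : ℝ} (hab : a < b)
    (hg : MonotoneOn g (Ioc a b)) (hc : ∀ x ∈ Ioc a b, c ≤ g x) :
    ∃ L, c ≤ L ∧ Tendsto g (𝓝[>] a) (𝓝 L) := by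
  have hlim := (hg.mono Ioo_subset_Ioc_self).tendsto_nhdsWithin_Ioo_right (nonempty_Ioo.2 hab)
    ⟨c, by rintro _ ⟨x, hx, rfl⟩; exact hc x (Ioo_subset_Ioc_self hx)⟩
  refine ⟨_, ge_of_tendsto hlim ?_, hlim⟩
  filter_upwards [Ioc_mem_nhdsGT hab] using hc

theorem hasDerivWithinAt_div_pow {u : ℝ → ℝ} {u' x : ℝ} {s : Set ℝ} (k : ℕ)
    (hu : HasDerivWithinAt u u' s x) (hx : x ≠ 0) :
    HasDerivWithinAt (fun y => u y / y ^ k) ((x * u' - k * u x) / x ^ (k + 1)) s x := by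
  refine (hu.div (hasDerivAt_pow k x).hasDerivWithinAt (pow_ne_zero k hx)).congr_deriv ?_
  rcases k with _ | k
  · simp [mul_div_cancel_left₀ _ hx]
  · simp only [Nat.add_sub_cancel]
    field_simp
    ring

theorem tendsto_pow_mul_div_pow_succ {u u' : ℝ → ℝ} (k : ℕ) (hu0 : u 0 = 0)
    (hu : HasDerivWithinAt u (u' 0) (Ioi 0) 0) (hu' : Tendsto u' (𝓝[>] 0) (𝓝 (u' 0))) :
    Tendsto (fun x => x ^ k * ((x * u' x - k * u x) / x ^ (k + 1))) (𝓝[>] 0)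
      (𝓝 (u' 0 - k * u' 0)) := by
  have hslope : Tendsto (fun x => u x / x) (𝓝[>] 0) (𝓝 (u' 0)) := by
    refine ((hasDerivWithinAt_iff_tendsto_slope' (lt_irrefl 0)).1 hu).congr fun x => ?_
    simp [slope_def_field, hu0]
  refine (hu'.sub (hslope.const_mul (k : ℝ))).congr' ?_
  filter_upwards [self_mem_nhdsWithin] with x hx
  field_simp [(mem_Ioi.1 hx).ne']
  ring

theorem integral_eq_sub_of_hasDerivWithinAt_Icc {f f' : ℝ → ℝ} {a b x : ℝ}
    (hf : ∀ t ∈ Icc a b, HasDerivWithinAt f (f' t) (Icc a b) t)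
    (hf' : ContinuousOn f' (Icc a b)) (hx : x ∈ Icc a b) :
    ∫ t in a..x, f' t = f x - f a := by
  have hsub : Icc a x ⊆ Icc a b := Icc_subset_Icc_right hx.2
  refine intervalIntegral.integral_eq_sub_of_hasDeriv_right_of_le hx.1
    (fun t ht => (hf t (hsub ht)).continuousWithinAt.mono hsub) (fun t ht => ?_)
    ((hf'.mono hsub).intervalIntegrable_of_Icc hx.1)
  exact ((hf t (hsub (Ioo_subset_Icc_self ht))).hasDerivAt
    (Icc_mem_nhds ht.1 (ht.2.trans_le hx.2))).hasDerivWithinAt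

theorem exists_tendsto_div_pow_nhdsGT {u u' : ℝ → ℝ} {b : ℝ} (k : ℕ) (hb : 0 < b)
    (hu : ∀ x ∈ Ioc 0 b, HasDerivWithinAt u (u' x) (Ioc 0 b) x)
    (hpos : ∀ x ∈ Ioc 0 b, 0 ≤ u x) (hk : ∀ x ∈ Ioc 0 b, 0 ≤ x * u' x - k * u x) :
    ∃ L, 0 ≤ L ∧ Tendsto (fun x => u x / x ^ k) (𝓝[>] 0) (𝓝 L) := by
  have hderiv (x) (hx : x ∈ Ioc 0 b) := hasDerivWithinAt_div_pow k (hu x hx) hx.1.ne'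
  have hmono : MonotoneOn (fun x => u x / x ^ k) (Ioc 0 b) := by
    refine monotoneOn_of_hasDerivWithinAt_nonneg
      (f' := fun x => (x * u' x - k * u x) / x ^ (k + 1)) (convex_Ioc 0 b)
      (fun x hx => (hderiv x hx).continuousWithinAt) ?_ ?_ <;> rw [interior_Ioc]
    · exact fun x hx => (hderiv x (Ioo_subset_Ioc_self hx)).mono Ioo_subset_Ioc_self
    · exact fun x hx => div_nonneg (hk x (Ioo_subset_Ioc_self hx)) (pow_nonneg hx.1.le _)
  exact hmono.exists_tendsto_nhdsGT hb fun x hx => div_nonneg (hpos x hx) (pow_nonneg hx.1.le _)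

theorem pow_mul_update_div_pow {u : ℝ → ℝ} {k : ℕ} (hk : k ≠ 0) (hu0 : u 0 = 0) (L t : ℝ) :
    t ^ k * update (fun x => u x / x ^ k) 0 L t = u t := by
  rcases eq_or_ne t 0 with rfl | ht
  · simp [hu0, zero_pow hk]
  · rw [update_of_ne ht]
    exact mul_div_cancel₀ _ (pow_ne_zero k ht)

theorem stmt5 (j : ℕ) (hj : 2 ≤ j) (f f' f'' : ℝ → ℝ)
    (hf' : ∀ x ∈ Icc (0:ℝ) 1, HasDerivWithinAt f (f' x) (Icc 0 1) x)
    (hf'' : ∀ x ∈ Icc (0:ℝ) 1, HasDerivWithinAt f' (f'' x) (Icc 0 1) x)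
    (hc : ContinuousOn f'' (Icc 0 1))
    (hpos : ∀ x ∈ Icc (0:ℝ) 1, 0 ≤ f' x)
    (hconv : ∀ x ∈ Icc (0:ℝ) 1, 0 ≤ x * f'' x - ((j : ℝ) - 1) * f' x) :
    ∃ φ φd : ℝ → ℝ,
      ContinuousOn φ (Icc 0 1) ∧
      (∀ x ∈ Ioc (0:ℝ) 1, HasDerivWithinAt φ (φd x) (Ioc 0 1) x) ∧
      ContinuousOn φd (Ioc 0 1) ∧
      (∀ x ∈ Icc (0:ℝ) 1, 0 ≤ φ x) ∧
      (∀ x ∈ Ioc (0:ℝ) 1, 0 ≤ φd x) ∧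
      (∃ L : ℝ, Filter.Tendsto (fun x => x ^ (j - 1) * φd x)
        (nhdsWithin 0 (Ioi 0)) (nhds L)) ∧
      (∀ x ∈ Icc (0:ℝ) 1, f x = f 0 + ∫ t in (0:ℝ)..x, t ^ (j - 1) * φ t) := by
  obtain ⟨k, rfl⟩ : ∃ k, j = k + 1 := ⟨j - 1, by omega⟩
  have hk : k ≠ 0 := by omega
  simp only [Nat.cast_add, Nat.cast_one, add_sub_cancel_right] at hconv
  simp only [Nat.add_sub_cancel]
  have h01 : (0:ℝ) ∈ Icc (0:ℝ) 1 := left_mem_Icc.2 zero_le_one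
  have hf'c : ContinuousOn f' (Icc 0 1) := fun x hx => (hf'' x hx).continuousWithinAt
  have hf'0 : f' 0 = 0 := by
    have : (1:ℝ) ≤ k := by exact_mod_cast Nat.one_le_iff_ne_zero.2 hk
    nlinarith [hconv 0 h01, hpos 0 h01]
  have hf''Ioc (x) (hx : x ∈ Ioc (0:ℝ) 1) : HasDerivWithinAt f' (f'' x) (Ioc 0 1) x :=
    (hf'' x (Ioc_subset_Icc_self hx)).mono Ioc_subset_Icc_self
  obtain ⟨L, hL0, hL⟩ := exists_tendsto_div_pow_nhdsGT k zero_lt_one hf''Ioc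
    (fun x hx => hpos x (Ioc_subset_Icc_self hx)) fun x hx => hconv x (Ioc_subset_Icc_self hx)
  set g : ℝ → ℝ := fun x => f' x / x ^ k
  have hφ (x) (hx : x ∈ Ioc (0:ℝ) 1) : update g 0 L x = g x := update_of_ne hx.1.ne' _ _
  refine ⟨update g 0 L, fun x => (x * f'' x - k * f' x) / x ^ (k + 1), ?_,
    fun x hx => (hasDerivWithinAt_div_pow k (hf''Ioc x hx) hx.1.ne').congr hφ (hφ x hx),
    ?_, ?_, fun x hx => div_nonneg (hconv x (Ioc_subset_Icc_self hx)) (pow_nonneg hx.1.le _),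
    ⟨_, tendsto_pow_mul_div_pow_succ k hf'0
      ((hf'' 0 h01).mono_of_mem_nhdsWithin (Icc_mem_nhdsGT zero_lt_one))
      ((hc 0 h01).mono_left (nhdsWithin_le_of_mem (Icc_mem_nhdsGT zero_lt_one)))⟩, ?_⟩
  · rw [continuousOn_update_iff, Icc_sdiff_left, nhdsWithin_Ioc_eq_nhdsGT zero_lt_one]
    exact ⟨fun x hx => (hf''Ioc x hx).continuousWithinAt.div (by fun_prop) (by simp [hx.1.ne']),
      fun _ => hL⟩
  · refine ContinuousOn.div ?_ (by fun_prop) fun x hx => pow_ne_zero _ hx.1.ne'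
    exact (continuousOn_id.mul (hc.mono Ioc_subset_Icc_self)).sub
      (continuousOn_const.mul (hf'c.mono Ioc_subset_Icc_self))
  · intro x hx
    rcases hx.1.eq_or_lt with rfl | hx0
    · simpa using hL0
    · simpa [hφ x ⟨hx0, hx.2⟩] using div_nonneg (hpos x hx) (pow_nonneg hx.1 _)
  · intro x hx
    simp only [g, pow_mul_update_div_pow hk hf'0]
    rw [integral_eq_sub_of_hasDerivWithinAt_Icc hf' hf'c hx, add_sub_cancel]
end

section
/- Let (f_0, f_1) be a Haar pair on [a,b] (f_0 strictly positive continuous, f_1/f_0 strictly increasing continuous) and let I = (f_1/f_0)([a,b]). Then a continuous f : [a,b] → ℝ is (f_0,f_1)-convex if and only if the function (f/f_0) ∘ (f_1/f_0)^{-1} is convex on I in the standard sense. -/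
open Set Finset

lemma det_fin_three_eq_mul_det_div_first_row {p₀ p₁ p₂ q₀ q₁ q₂ r₀ r₁ r₂ : ℝ}
    (h₀ : p₀ ≠ 0) (h₁ : p₁ ≠ 0) (h₂ : p₂ ≠ 0) :
    Matrix.det !![p₀, p₁, p₂; q₀, q₁, q₂; r₀, r₁, r₂] =
      p₀ * p₁ * p₂ *
        Matrix.det !![1, 1, 1; q₀ / p₀, q₁ / p₁, q₂ / p₂; r₀ / p₀, r₁ / p₁, r₂ / p₂] := by
  simp only [Matrix.det_fin_three, Matrix.of_apply, Matrix.cons_val', Matrix.cons_val_zero,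
    Matrix.cons_val_one, Matrix.cons_val_two, Matrix.empty_val', Matrix.cons_val_fin_one,
    Matrix.head_cons, Matrix.head_fin_const, Matrix.tail_cons]
  field_simp

lemma det_fin_three_one_nonneg_iff_slope_le {u₀ u₁ u₂ v₀ v₁ v₂ : ℝ} (h₀₁ : u₀ < u₁)
    (h₁₂ : u₁ < u₂) :
    0 ≤ Matrix.det !![1, 1, 1; u₀, u₁, u₂; v₀, v₁, v₂] ↔
      (v₁ - v₀) / (u₁ - u₀) ≤ (v₂ - v₁) / (u₂ - u₁) := by
  have hdet : Matrix.det !![1, 1, 1; u₀, u₁, u₂; v₀, v₁, v₂] =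
      (v₂ - v₁) * (u₁ - u₀) - (v₁ - v₀) * (u₂ - u₁) := by
    simp only [Matrix.det_fin_three, Matrix.of_apply, Matrix.cons_val', Matrix.cons_val_zero,
      Matrix.cons_val_one, Matrix.cons_val_two, Matrix.empty_val', Matrix.cons_val_fin_one,
      Matrix.head_cons, Matrix.head_fin_const, Matrix.tail_cons]
    ring
  rw [hdet, sub_nonneg, div_le_div_iff₀ (sub_pos.2 h₀₁) (sub_pos.2 h₁₂)]

lemma det_fin_three_nonneg_iff_slope_le {p₀ p₁ p₂ q₀ q₁ q₂ r₀ r₁ r₂ : ℝ}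
    (h₀ : 0 < p₀) (h₁ : 0 < p₁) (h₂ : 0 < p₂)
    (h₀₁ : q₀ / p₀ < q₁ / p₁) (h₁₂ : q₁ / p₁ < q₂ / p₂) :
    0 ≤ Matrix.det !![p₀, p₁, p₂; q₀, q₁, q₂; r₀, r₁, r₂] ↔
      (r₁ / p₁ - r₀ / p₀) / (q₁ / p₁ - q₀ / p₀) ≤ (r₂ / p₂ - r₁ / p₁) / (q₂ / p₂ - q₁ / p₁) := by
  rw [det_fin_three_eq_mul_det_div_first_row h₀.ne' h₁.ne' h₂.ne', mul_nonneg_iff_of_pos_left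
    (by positivity), det_fin_three_one_nonneg_iff_slope_le h₀₁ h₁₂]

lemma convexOn_image_comp_iff_slope_le {s : Set ℝ} {φ g h : ℝ → ℝ} (hφ : StrictMonoOn φ s)
    (hconv : Convex ℝ (φ '' s)) (hinv : ∀ x ∈ s, h (φ x) = x) :
    ConvexOn ℝ (φ '' s) (fun t => g (h t)) ↔
      ∀ x₀ ∈ s, ∀ x₁ ∈ s, ∀ x₂ ∈ s, x₀ < x₁ → x₁ < x₂ →
        (g x₁ - g x₀) / (φ x₁ - φ x₀) ≤ (g x₂ - g x₁) / (φ x₂ - φ x₁) := by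
  rw [convexOn_iff_slope_mono_adjacent, and_iff_right hconv]
  constructor
  · intro hslope x₀ hx₀ x₁ hx₁ x₂ hx₂ h₀₁ h₁₂
    simpa only [hinv _ hx₀, hinv _ hx₁, hinv _ hx₂] using
      hslope (mem_image_of_mem φ hx₀) (mem_image_of_mem φ hx₂) (hφ hx₀ hx₁ h₀₁) (hφ hx₁ hx₂ h₁₂)
  · rintro hslope t₀ t₁ t₂ ht₀ ht₂ h₀₁ h₁₂
    obtain ⟨x₁, hx₁, rfl⟩ : t₁ ∈ φ '' s := hconv.ordConnected.out ht₀ ht₂ ⟨h₀₁.le, h₁₂.le⟩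
    obtain ⟨x₀, hx₀, rfl⟩ := ht₀
    obtain ⟨x₂, hx₂, rfl⟩ := ht₂
    simpa only [hinv _ hx₀, hinv _ hx₁, hinv _ hx₂] using
      hslope x₀ hx₀ x₁ hx₁ x₂ hx₂ ((hφ.lt_iff_lt hx₀ hx₁).1 h₀₁) ((hφ.lt_iff_lt hx₁ hx₂).1 h₁₂)

theorem stmt12_general (a b : ℝ) (f0 f1 f h : ℝ → ℝ)
    (hf0c : ContinuousOn f0 (Icc a b))
    (hf0pos : ∀ x ∈ Icc a b, 0 < f0 x)
    (hf1c : ContinuousOn f1 (Icc a b))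
    (hmono : StrictMonoOn (fun x => f1 x / f0 x) (Icc a b))
    (hinv : ∀ x ∈ Icc a b, h (f1 x / f0 x) = x) :
    (∀ x0 ∈ Icc a b, ∀ x1 ∈ Icc a b, ∀ x2 ∈ Icc a b, x0 < x1 → x1 < x2 →
        0 ≤ Matrix.det
          !![f0 x0, f0 x1, f0 x2; f1 x0, f1 x1, f1 x2; f x0, f x1, f x2]) ↔
      ConvexOn ℝ ((fun x => f1 x / f0 x) '' Icc a b)
        (fun t => f (h t) / f0 (h t)) := by
  have hconv : Convex ℝ ((fun x => f1 x / f0 x) '' Icc a b) :=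
    (isPreconnected_Icc.image _ (hf1c.div hf0c fun x hx => (hf0pos x hx).ne')).convex
  rw [convexOn_image_comp_iff_slope_le (g := fun x => f x / f0 x) hmono hconv hinv]
  refine forall₂_congr fun x₀ hx₀ => forall₂_congr fun x₁ hx₁ => forall₂_congr fun x₂ hx₂ =>
    forall₂_congr fun h₀₁ h₁₂ => ?_
  exact det_fin_three_nonneg_iff_slope_le (hf0pos x₀ hx₀) (hf0pos x₁ hx₁) (hf0pos x₂ hx₂)
    (hmono hx₀ hx₁ h₀₁) (hmono hx₁ hx₂ h₁₂)

theorem stmt12 (a b : ℝ) (hab : a < b) (f0 f1 f h : ℝ → ℝ)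
    (hf0c : ContinuousOn f0 (Icc a b))
    (hf0pos : ∀ x ∈ Icc a b, 0 < f0 x)
    (hf1c : ContinuousOn f1 (Icc a b))
    (hmono : StrictMonoOn (fun x => f1 x / f0 x) (Icc a b))
    (hfc : ContinuousOn f (Icc a b))
    (hinv : ∀ x ∈ Icc a b, h (f1 x / f0 x) = x) :
    (∀ x0 ∈ Icc a b, ∀ x1 ∈ Icc a b, ∀ x2 ∈ Icc a b, x0 < x1 → x1 < x2 →
        0 ≤ Matrix.det
          !![f0 x0, f0 x1, f0 x2; f1 x0, f1 x1, f1 x2; f x0, f x1, f x2]) ↔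
      ConvexOn ℝ ((fun x => f1 x / f0 x) '' Icc a b)
        (fun t => f (h t) / f0 (h t)) :=
  stmt12_general a b f0 f1 f h hf0c hf0pos hf1c hmono hinv
end

section
/- Let 𝓑_n be a Bernstein-type operator 𝓑_n f(x) = Σ_{k=0}^n f(t_{n,k}) α_{n,k} p_{n,k}(x) on C[a,b] with α_{n,k} > 0 and nodes t_{n,k} ∈ [a,b], and suppose 𝓑_n fixes both functions f_0 and f_1 of a Haar pair (f_0, f_1). Then for every (f_0,f_1)-convex continuous function f on [a,b], 𝓑_n f ≥ f pointwise. -/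
/-!
Dividing by `f₀` turns `(f₀, f₁)`-convexity into convexity of `f / f₀` with respect to the
strictly increasing "abscissa" `f₁ / f₀`: slopes measured against `f₁ / f₀` increase. Hence at
every interior point `x` there is a generalized support line `c₀ f₀ + c₁ f₁ ≤ f` touching `f`
at `x`. For fixed `x`, `g ↦ 𝓑 g x` is a nonnegative combination of point evaluations that
fixes `f₀` and `f₁`, so `f x = 𝓑 (c₀ f₀ + c₁ f₁) x ≤ 𝓑 f x`. At an endpoint `x` only one
Bernstein basis function survives, `𝓑 g x = c · g s`; fixing `f₀` and `f₁` forces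
`f₁ s / f₀ s = f₁ x / f₀ x`, hence `s = x` and `c = 1`, so `𝓑 f = f` there.
-/

open Set Finset

def HaarConvexOn (f₀ f₁ f : ℝ → ℝ) (s : Set ℝ) : Prop :=
  ∀ x₀ ∈ s, ∀ x₁ ∈ s, ∀ x₂ ∈ s, x₀ < x₁ → x₁ < x₂ →
    0 ≤ Matrix.det !![f₀ x₀, f₀ x₁, f₀ x₂; f₁ x₀, f₁ x₁, f₁ x₂; f x₀, f x₁, f x₂]

lemma det_fin_three_eq_mul_cross {p₀ p₁ p₂ q₀ q₁ q₂ r₀ r₁ r₂ : ℝ}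
    (h₀ : p₀ ≠ 0) (h₁ : p₁ ≠ 0) (h₂ : p₂ ≠ 0) :
    Matrix.det !![p₀, p₁, p₂; q₀, q₁, q₂; r₀, r₁, r₂] = p₀ * p₁ * p₂ *
      ((q₁ / p₁ - q₀ / p₀) * (r₂ / p₂ - r₁ / p₁) - (q₂ / p₂ - q₁ / p₁) * (r₁ / p₁ - r₀ / p₀)) := by
  rw [Matrix.det_fin_three]
  simp only [Matrix.of_apply, Matrix.cons_val', Matrix.cons_val_zero, Matrix.cons_val_one,
    Matrix.cons_val_two, Matrix.empty_val', Matrix.cons_val_fin_one, Matrix.head_cons,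
    Matrix.tail_cons, Matrix.head_fin_const]
  field_simp
  ring

lemma HaarConvexOn.slope_le_slope {f₀ f₁ f : ℝ → ℝ} {s : Set ℝ} (hf : HaarConvexOn f₀ f₁ f s)
    (hf₀ : ∀ x ∈ s, 0 < f₀ x) (hmono : StrictMonoOn (fun x => f₁ x / f₀ x) s)
    {x y z : ℝ} (hy : y ∈ s) (hx : x ∈ s) (hz : z ∈ s) (hyx : y < x) (hxz : x < z) :
    (f x / f₀ x - f y / f₀ y) / (f₁ x / f₀ x - f₁ y / f₀ y) ≤
      (f z / f₀ z - f x / f₀ x) / (f₁ z / f₀ z - f₁ x / f₀ x) := by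
  have hgyx := sub_pos.2 (hmono hy hx hyx)
  have hgxz := sub_pos.2 (hmono hx hz hxz)
  have hdet := hf y hy x hx z hz hyx hxz
  rw [det_fin_three_eq_mul_cross (hf₀ y hy).ne' (hf₀ x hx).ne' (hf₀ z hz).ne'] at hdet
  have hcross := nonneg_of_mul_nonneg_right hdet
    (mul_pos (mul_pos (hf₀ y hy) (hf₀ x hx)) (hf₀ z hz))
  rw [div_le_div_iff₀ hgyx hgxz]
  linarith

lemma exists_supporting_slope {g h : ℝ → ℝ} {a b x : ℝ} (hg : StrictMonoOn g (Icc a b))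
    (hslope : ∀ y ∈ Icc a b, ∀ z ∈ Icc a b, y < x → x < z →
      (h x - h y) / (g x - g y) ≤ (h z - h x) / (g z - g x))
    (hx : x ∈ Ioo a b) : ∃ m, ∀ y ∈ Icc a b, h x + m * (g y - g x) ≤ h y := by
  have hxI : x ∈ Icc a b := Ioo_subset_Icc_self hx
  have hleft : ∀ y ∈ Ico a x, y ∈ Icc a b := fun y hy => ⟨hy.1, hy.2.le.trans hx.2.le⟩
  set S := (fun y => (h x - h y) / (g x - g y)) '' Ico a x
  have hS_le : ∀ z ∈ Icc a b, x < z → ∀ s ∈ S, s ≤ (h z - h x) / (g z - g x) := by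
    rintro z hz hxz _ ⟨y, hy, rfl⟩
    exact hslope y (hleft y hy) z hz hy.2 hxz
  have hSbdd : BddAbove S := ⟨_, hS_le b (right_mem_Icc.2 (hx.1.trans hx.2).le) hx.2⟩
  refine ⟨sSup S, fun y hy => ?_⟩
  rcases lt_trichotomy y x with hyx | rfl | hxy
  · have hle : (h x - h y) / (g x - g y) ≤ sSup S := le_csSup hSbdd ⟨y, ⟨hy.1, hyx⟩, rfl⟩
    rw [div_le_iff₀ (sub_pos.2 (hg hy hxI hyx))] at hle
    linarith
  · simp
  · have hle : sSup S ≤ (h y - h x) / (g y - g x) :=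
      csSup_le ⟨_, a, ⟨le_rfl, hx.1⟩, rfl⟩ (hS_le y hy hxy)
    rw [le_div_iff₀ (sub_pos.2 (hg hxI hy hxy))] at hle
    linarith

lemma HaarConvexOn.exists_support {f₀ f₁ f : ℝ → ℝ} {a b x : ℝ}
    (hf : HaarConvexOn f₀ f₁ f (Icc a b)) (hf₀ : ∀ x ∈ Icc a b, 0 < f₀ x)
    (hmono : StrictMonoOn (fun x => f₁ x / f₀ x) (Icc a b)) (hx : x ∈ Ioo a b) :
    ∃ c₀ c₁ : ℝ, (∀ y ∈ Icc a b, c₀ * f₀ y + c₁ * f₁ y ≤ f y) ∧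
      c₀ * f₀ x + c₁ * f₁ x = f x := by
  obtain ⟨m, hm⟩ := exists_supporting_slope (h := fun x => f x / f₀ x) hmono
    (fun y hy z hz => hf.slope_le_slope hf₀ hmono hy (Ioo_subset_Icc_self hx) hz) hx
  have hf₀x := (hf₀ x (Ioo_subset_Icc_self hx)).ne'
  refine ⟨f x / f₀ x - m * (f₁ x / f₀ x), m, fun y hy => ?_, by field_simp; ring⟩
  have hsupp := (le_div_iff₀ (hf₀ y hy)).1 (hm y hy)
  calc _ = (f x / f₀ x + m * (f₁ y / f₀ y - f₁ x / f₀ x)) * f₀ y := by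
        field_simp [(hf₀ y hy).ne']; ring
    _ ≤ f y := hsupp

lemma le_of_support_of_fixes {L : (ℝ → ℝ) → ℝ} {n : ℕ} {t w : ℕ → ℝ} {s : Set ℝ}
    (hL : ∀ g, L g = ∑ k ∈ range (n + 1), g (t k) * w k) (ht : ∀ k ≤ n, t k ∈ s)
    (hw : ∀ k ≤ n, 0 ≤ w k) {f₀ f₁ f : ℝ → ℝ} {x c₀ c₁ : ℝ} (hfix₀ : L f₀ = f₀ x)
    (hfix₁ : L f₁ = f₁ x) (hsupp : ∀ y ∈ s, c₀ * f₀ y + c₁ * f₁ y ≤ f y)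
    (htouch : c₀ * f₀ x + c₁ * f₁ x = f x) : f x ≤ L f := by
  rw [← htouch, ← hfix₀, ← hfix₁, hL, hL, hL, mul_sum, mul_sum, ← sum_add_distrib]
  refine sum_le_sum fun k hk => ?_
  have hkn : k ≤ n := Nat.lt_succ_iff.1 (mem_range.1 hk)
  calc c₀ * (f₀ (t k) * w k) + c₁ * (f₁ (t k) * w k)
        = (c₀ * f₀ (t k) + c₁ * f₁ (t k)) * w k := by ring
    _ ≤ f (t k) * w k := mul_le_mul_of_nonneg_right (hsupp _ (ht k hkn)) (hw k hkn)

lemma eq_of_eval_of_fixes {L : (ℝ → ℝ) → ℝ} {t c : ℝ} {s : Set ℝ} (hL : ∀ g, L g = g t * c)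
    {f₀ f₁ : ℝ → ℝ} (hf₀ : ∀ x ∈ s, 0 < f₀ x) (hinj : InjOn (fun x => f₁ x / f₀ x) s)
    (ht : t ∈ s) {x : ℝ} (hx : x ∈ s) (hfix₀ : L f₀ = f₀ x) (hfix₁ : L f₁ = f₁ x)
    (f : ℝ → ℝ) : L f = f x := by
  rw [hL] at hfix₀ hfix₁
  have hc : c ≠ 0 := by rintro rfl; exact (hf₀ x hx).ne' (by simpa using hfix₀.symm)
  have htx : t = x := hinj ht hx <| by
    simp only [← hfix₀, ← hfix₁, mul_div_mul_right _ _ hc]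
  subst htx
  have hc1 : c = 1 := (mul_eq_left₀ (hf₀ t ht).ne').1 hfix₀
  rw [hL, hc1, mul_one]

section Bernstein

variable {a b : ℝ} (n : ℕ) (u : ℕ → ℝ)

lemma sum_mul_bernstein_left (hab : a < b) :
    ∑ k ∈ range (n + 1), u k * ((n.choose k : ℝ) * ((a - a) / (b - a)) ^ k *
      ((b - a) / (b - a)) ^ (n - k)) = u 0 := by
  simp [sum_range_succ', div_self (sub_pos.2 hab).ne']

lemma sum_mul_bernstein_right (hab : a < b) :
    ∑ k ∈ range (n + 1), u k * ((n.choose k : ℝ) * ((b - a) / (b - a)) ^ k *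
      ((b - b) / (b - a)) ^ (n - k)) = u n := by
  rw [sum_range_succ, sum_eq_zero fun k hk => ?_]
  · simp [div_self (sub_pos.2 hab).ne']
  · simp [Nat.sub_ne_zero_of_lt (mem_range.1 hk)]

lemma scaled_bernstein_nonneg {k : ℕ} {x : ℝ} (hx : x ∈ Icc a b) :
    0 ≤ (n.choose k : ℝ) * ((x - a) / (b - a)) ^ k * ((b - x) / (b - a)) ^ (n - k) := by
  have hba : 0 ≤ b - a := sub_nonneg.2 (hx.1.trans hx.2)
  have hxa : 0 ≤ x - a := sub_nonneg.2 hx.1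
  have hbx : 0 ≤ b - x := sub_nonneg.2 hx.2
  positivity

end Bernstein

theorem stmt13_general (a b : ℝ) (hab : a < b) (n : ℕ) (t α : ℕ → ℝ)
    (ht : ∀ k ≤ n, t k ∈ Icc a b) (hα : ∀ k ≤ n, 0 < α k)
    (f0 f1 : ℝ → ℝ)
    (hf0pos : ∀ x ∈ Icc a b, 0 < f0 x)
    (hmono : StrictMonoOn (fun x => f1 x / f0 x) (Icc a b))
    (B : (ℝ → ℝ) → ℝ → ℝ)
    (hB : ∀ g x, B g x = ∑ k ∈ Finset.range (n + 1),
      g (t k) * α k * ((n.choose k : ℝ) * ((x - a) / (b - a)) ^ k *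
        ((b - x) / (b - a)) ^ (n - k)))
    (hfix0 : ∀ x ∈ Icc a b, B f0 x = f0 x)
    (hfix1 : ∀ x ∈ Icc a b, B f1 x = f1 x)
    (f : ℝ → ℝ)
    (hconv : ∀ x0 ∈ Icc a b, ∀ x1 ∈ Icc a b, ∀ x2 ∈ Icc a b, x0 < x1 → x1 < x2 →
      0 ≤ Matrix.det
        !![f0 x0, f0 x1, f0 x2; f1 x0, f1 x1, f1 x2; f x0, f x1, f x2]) :
    ∀ x ∈ Icc a b, f x ≤ B f x := by
  intro x hx
  obtain rfl | hax := hx.1.eq_or_lt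
  · exact (eq_of_eval_of_fixes (fun g => (hB g a).trans (sum_mul_bernstein_left n _ hab))
      hf0pos hmono.injOn (ht 0 n.zero_le) hx (hfix0 a hx) (hfix1 a hx) f).ge
  obtain rfl | hxb := hx.2.eq_or_lt'
  · exact (eq_of_eval_of_fixes (fun g => (hB g b).trans (sum_mul_bernstein_right n _ hab))
      hf0pos hmono.injOn (ht n le_rfl) hx (hfix0 b hx) (hfix1 b hx) f).ge
  obtain ⟨c₀, c₁, hsupp, htouch⟩ := HaarConvexOn.exists_support hconv hf0pos hmono ⟨hax, hxb⟩
  exact le_of_support_of_fixes (fun g => (hB g x).trans (sum_congr rfl fun k _ => mul_assoc ..))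
    ht (fun k hk => mul_nonneg (hα k hk).le (scaled_bernstein_nonneg n hx))
    (hfix0 x hx) (hfix1 x hx) hsupp htouch

theorem stmt13 (a b : ℝ) (hab : a < b) (n : ℕ) (t α : ℕ → ℝ)
    (ht : ∀ k ≤ n, t k ∈ Icc a b) (hα : ∀ k ≤ n, 0 < α k)
    (f0 f1 : ℝ → ℝ)
    (hf0pos : ∀ x ∈ Icc a b, 0 < f0 x)
    (hmono : StrictMonoOn (fun x => f1 x / f0 x) (Icc a b))
    (B : (ℝ → ℝ) → ℝ → ℝ)
    (hB : ∀ g x, B g x = ∑ k ∈ Finset.range (n + 1),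
      g (t k) * α k * ((n.choose k : ℝ) * ((x - a) / (b - a)) ^ k *
        ((b - x) / (b - a)) ^ (n - k)))
    (hfix0 : ∀ x ∈ Icc a b, B f0 x = f0 x)
    (hfix1 : ∀ x ∈ Icc a b, B f1 x = f1 x)
    (f : ℝ → ℝ) (hfc : ContinuousOn f (Icc a b))
    (hconv : ∀ x0 ∈ Icc a b, ∀ x1 ∈ Icc a b, ∀ x2 ∈ Icc a b, x0 < x1 → x1 < x2 →
      0 ≤ Matrix.det
        !![f0 x0, f0 x1, f0 x2; f1 x0, f1 x1, f1 x2; f x0, f x1, f x2]) :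
    ∀ x ∈ Icc a b, f x ≤ B f x :=
  stmt13_general a b hab n t α ht hα f0 f1 hf0pos hmono B hB hfix0 hfix1 f hconv
end

section
/- For all integers n ≥ j ≥ 2 and 0 ≤ k ≤ n, k/n − t_{n,k}^j ≤ (j−1)/n, where t_{n,k}^j = (k(k−1)⋯(k−j+1)/(n(n−1)⋯(n−j+1)))^{1/j}. -/
open Set Finset

/-! For `k ≥ j` every factor `(k - i)/(n - i)`, `i < j`, of the ratio defining the node is at least
`(k - j + 1)/n`, so the node itself is at least `(k - j + 1)/n`. For `k < j` the numerator
vanishes and the node is `0`. -/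

lemma sub_div_le_sub_div_sub {k n i m : ℝ} (hi : 0 ≤ i) (him : i ≤ m) (hik : i ≤ k)
    (hin : i < n) : (k - m) / n ≤ (k - i) / (n - i) := by
  rw [div_le_div_iff₀ (by linarith) (by linarith)]
  -- (k - i) n - (k - m) (n - i) = (m - i) (n - i) + i (k - i)
  nlinarith [mul_nonneg (sub_nonneg.2 him) (sub_nonneg.2 hin.le), mul_nonneg hi (sub_nonneg.2 hik)]

lemma akrNode_eq_zero_of_lt {n j k : ℕ} (hj : j ≠ 0) (hkj : k < j) : akrNode n j k = 0 := by
  have hprod : ∏ i ∈ range j, ((k : ℝ) - i) = 0 :=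
    prod_eq_zero (mem_range.2 hkj) (sub_self _)
  rw [akrNode, hprod, zero_div, Real.zero_rpow (by positivity)]

lemma sub_div_le_akrNode {n j k : ℕ} (hj : j ≠ 0) (hjk : j ≤ k) (hkn : k ≤ n) :
    ((k : ℝ) - (j - 1)) / n ≤ akrNode n j k := by
  set c := ((k : ℝ) - (j - 1)) / n
  have hjk' : (j : ℝ) ≤ k := by exact_mod_cast hjk
  have hc : 0 ≤ c := div_nonneg (by linarith) (Nat.cast_nonneg n)
  have hfactor : ∀ i ∈ range j, c ≤ ((k : ℝ) - i) / ((n : ℝ) - i) := by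
    intro i hi
    have hij : (i : ℝ) + 1 ≤ j := by exact_mod_cast mem_range.1 hi
    have hin : (i : ℝ) < n := by exact_mod_cast (mem_range.1 hi).trans_le (hjk.trans hkn)
    exact sub_div_le_sub_div_sub (Nat.cast_nonneg i) (by linarith) (by linarith) hin
  have hpow : c ^ j ≤ (∏ i ∈ range j, ((k : ℝ) - i)) / ∏ i ∈ range j, ((n : ℝ) - i) :=
    calc c ^ j = ∏ _i ∈ range j, c := by rw [prod_const, card_range]
      _ ≤ ∏ i ∈ range j, ((k : ℝ) - i) / ((n : ℝ) - i) := prod_le_prod (fun _ _ ↦ hc) hfactor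
      _ = _ := prod_div_distrib _ _
  calc c = (c ^ j) ^ (j : ℝ)⁻¹ := (Real.pow_rpow_inv_natCast hc hj).symm
    _ ≤ akrNode n j k := Real.rpow_le_rpow (by positivity) hpow (by positivity)

theorem stmt15_general (n j k : ℕ) (hj : 2 ≤ j) (hk : k ≤ n) :
    (k : ℝ) / n - akrNode n j k ≤ ((j : ℝ) - 1) / n := by
  rcases lt_or_ge k j with hkj | hjk
  · have hkj' : (k : ℝ) ≤ j - 1 := by
      rw [le_sub_iff_add_le]
      exact_mod_cast hkj
    rw [akrNode_eq_zero_of_lt (by omega) hkj, sub_zero]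
    gcongr
  · calc (k : ℝ) / n - akrNode n j k ≤ k / n - (k - (j - 1)) / n := by
          linarith [sub_div_le_akrNode (by omega) hjk hk]
      _ = ((j : ℝ) - 1) / n := by ring

theorem stmt15 (n j k : ℕ) (hj : 2 ≤ j) (hn : j ≤ n) (hk : k ≤ n) :
    (k : ℝ) / n - akrNode n j k ≤ ((j : ℝ) - 1) / n :=
  stmt15_general n j k hj hk
end
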